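/- arXiv:2106.15407 — 5 statements merged into one kernel-verified Lean document; each statement's English description precedes it below -/
import Mathlib

section
/- There exists a constant λ > 0 (depending only on the model parameters) such that for every X ∈ ℝ⁸ whose first component S satisfies |S| ≤ N, the vector field of the COVID-19 model satisfies the linear growth bound ‖F(X)‖ ≤ λ‖X‖; in particular, for every ε > 0, ‖F(X)‖ ≤ ε + λ‖X‖ for all such X. -/
set_option maxHeartbeats 1000000


/-- The COVID-19 model vector field, with components
`(S, E, I, P, A, H, R, D) = (X 0, …, X 7)`. -/
noncomputable def covidField (N β β' l κ ρ₁ ρ₂ γa γi γr δi δp δh : ℝ)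
    (X : Fin 8 → ℝ) : Fin 8 → ℝ :=
  ![-(β * X 2 * X 0 / N) - l * β * X 5 * X 0 / N - β' * X 3 * X 0 / N,
    β * X 2 * X 0 / N + l * β * X 5 * X 0 / N + β' * X 3 * X 0 / N - κ * X 1,
    κ * ρ₁ * X 1 - (γa + γi + δi) * X 2,
    κ * ρ₂ * X 1 - (γa + γi + δp) * X 3,
    κ * (1 - ρ₁ - ρ₂) * X 1,
    γa * (X 2 + X 3) - (γr + δh) * X 5,
    γi * (X 2 + X 3) + γr * X 5,
    δi * X 2 + δp * X 3 + δh * X 5]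

/-- Linear growth bound for the COVID-19 vector field when `|S| ≤ N`. -/
theorem covidField_linear_growth (N β β' l κ ρ₁ ρ₂ γa γi γr δi δp δh : ℝ)
    (hN : 0 < N) (hβ : 0 < β) (hβ' : 0 < β') (hl : 0 < l) (hκ : 0 < κ)
    (hρ₁ : 0 < ρ₁) (hρ₂ : 0 < ρ₂) (hρ : ρ₁ + ρ₂ < 1)
    (hγa : 0 < γa) (hγi : 0 < γi) (hγr : 0 < γr)
    (hδi : 0 < δi) (hδp : 0 < δp) (hδh : 0 < δh) :
    ∃ lam > (0:ℝ), ∀ X : Fin 8 → ℝ, |X 0| ≤ N →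
      ‖covidField N β β' l κ ρ₁ ρ₂ γa γi γr δi δp δh X‖ ≤ lam * ‖X‖ ∧
      ∀ ε > (0:ℝ),
        ‖covidField N β β' l κ ρ₁ ρ₂ γa γi γr δi δp δh X‖ ≤ ε + lam * ‖X‖ := by
  set lam : ℝ := β + l * β + β' + 2 * κ + 2 * γa + 2 * γi + 2 * γr + 2 * δi + 2 * δp + 2 * δh + 1
    with hlam
  have hlampos : 0 < lam := by positivity
  refine ⟨lam, hlampos, ?_⟩
  intro X hX
  have hn : (0:ℝ) ≤ ‖X‖ := norm_nonneg X
  have hmain : ‖covidField N β β' l κ ρ₁ ρ₂ γa γi γr δi δp δh X‖ ≤ lam * ‖X‖ := by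
    apply pi_norm_le_iff_of_nonneg (by positivity) |>.2
    intro i
    have hb : ∀ j : Fin 8, |X j| ≤ ‖X‖ := fun j => by
      simpa using norm_le_pi_norm X j
    have h1 := abs_le.1 (hb 1)
    have h2 := abs_le.1 (hb 2); have h3 := abs_le.1 (hb 3)
    have h5 := abs_le.1 (hb 5)
    have hs : |X 0 / N| ≤ 1 := by
      rw [abs_div, abs_of_pos hN, div_le_one hN]; exact hX
    have hu : ∀ j : Fin 8, |X j * (X 0 / N)| ≤ ‖X‖ := fun j => by
      rw [abs_mul]
      calc |X j| * |X 0 / N| ≤ ‖X‖ * 1 :=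
            mul_le_mul (hb j) hs (abs_nonneg _) hn
        _ = ‖X‖ := mul_one _
    have hu2 := abs_le.1 (hu 2); have hu3 := abs_le.1 (hu 3); have hu5 := abs_le.1 (hu 5)
    have p1 : 0 ≤ β * ‖X‖ := by positivity
    have p2 : 0 ≤ β' * ‖X‖ := by positivity
    have p3 : 0 ≤ l * β * ‖X‖ := by positivity
    have p4 : 0 ≤ κ * ‖X‖ := by positivity
    have p5 : 0 ≤ γa * ‖X‖ := by positivity
    have p6 : 0 ≤ γi * ‖X‖ := by positivity
    have p7 : 0 ≤ γr * ‖X‖ := by positivity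
    have p8 : 0 ≤ δi * ‖X‖ := by positivity
    have p9 : 0 ≤ δp * ‖X‖ := by positivity
    have p10 : 0 ≤ δh * ‖X‖ := by positivity
    fin_cases i
    · show |(-(β * X 2 * X 0 / N) - l * β * X 5 * X 0 / N - β' * X 3 * X 0 / N : ℝ)| ≤ lam * ‖X‖
      rw [abs_le, hlam]
      have a1 := mul_le_mul_of_nonneg_left hu2.2 hβ.le
      have a2 := mul_le_mul_of_nonneg_left hu2.1 hβ.le
      have a3 := mul_le_mul_of_nonneg_left hu3.2 hβ'.le
      have a4 := mul_le_mul_of_nonneg_left hu3.1 hβ'.le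
      have a5 := mul_le_mul_of_nonneg_left hu5.2 (mul_nonneg hl.le hβ.le)
      have a6 := mul_le_mul_of_nonneg_left hu5.1 (mul_nonneg hl.le hβ.le)
      ring_nf at a1 a2 a3 a4 a5 a6 ⊢
      constructor <;>
        linarith [p1, p2, p3, p4, p5, p6, p7, p8, p9, p10, hn, a1, a2, a3, a4, a5, a6]
    · show |(β * X 2 * X 0 / N + l * β * X 5 * X 0 / N + β' * X 3 * X 0 / N - κ * X 1 : ℝ)| ≤ lam * ‖X‖
      rw [abs_le, hlam]
      have a1 := mul_le_mul_of_nonneg_left hu2.2 hβ.le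
      have a2 := mul_le_mul_of_nonneg_left hu2.1 hβ.le
      have a3 := mul_le_mul_of_nonneg_left hu3.2 hβ'.le
      have a4 := mul_le_mul_of_nonneg_left hu3.1 hβ'.le
      have a5 := mul_le_mul_of_nonneg_left hu5.2 (mul_nonneg hl.le hβ.le)
      have a6 := mul_le_mul_of_nonneg_left hu5.1 (mul_nonneg hl.le hβ.le)
      ring_nf at a1 a2 a3 a4 a5 a6 ⊢
      have a7 := mul_le_mul_of_nonneg_left h1.2 hκ.le
      have a8 := mul_le_mul_of_nonneg_left h1.1 hκ.le
      constructor <;>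
        linarith [p1, p2, p3, p4, p5, p6, p7, p8, p9, p10, hn, a1, a2, a3, a4, a5, a6, a7, a8]
    · show |(κ * ρ₁ * X 1 - (γa + γi + δi) * X 2 : ℝ)| ≤ lam * ‖X‖
      rw [abs_le, hlam]
      constructor <;>
        linarith [p1, p2, p3, p4, p5, p6, p7, p8, p9, p10, hn, mul_le_mul_of_nonneg_left h1.2 (mul_nonneg hκ.le hρ₁.le),
          mul_le_mul_of_nonneg_left h1.1 (mul_nonneg hκ.le hρ₁.le),
          mul_le_mul_of_nonneg_left h2.2 (by positivity : (0:ℝ) ≤ γa + γi + δi),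
          mul_le_mul_of_nonneg_left h2.1 (by positivity : (0:ℝ) ≤ γa + γi + δi),
          mul_nonneg (mul_nonneg hκ.le hn) (by linarith : (0:ℝ) ≤ 1 - ρ₁)]
    · show |(κ * ρ₂ * X 1 - (γa + γi + δp) * X 3 : ℝ)| ≤ lam * ‖X‖
      rw [abs_le, hlam]
      constructor <;>
        linarith [p1, p2, p3, p4, p5, p6, p7, p8, p9, p10, hn, mul_le_mul_of_nonneg_left h1.2 (mul_nonneg hκ.le hρ₂.le),
          mul_le_mul_of_nonneg_left h1.1 (mul_nonneg hκ.le hρ₂.le),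
          mul_le_mul_of_nonneg_left h3.2 (by positivity : (0:ℝ) ≤ γa + γi + δp),
          mul_le_mul_of_nonneg_left h3.1 (by positivity : (0:ℝ) ≤ γa + γi + δp),
          mul_nonneg (mul_nonneg hκ.le hn) (by linarith : (0:ℝ) ≤ 1 - ρ₂)]
    · show |(κ * (1 - ρ₁ - ρ₂) * X 1 : ℝ)| ≤ lam * ‖X‖
      rw [abs_le, hlam]
      constructor <;>
        linarith [p1, p2, p3, p4, p5, p6, p7, p8, p9, p10, hn, mul_le_mul_of_nonneg_left h1.2
            (mul_nonneg hκ.le (by linarith : (0:ℝ) ≤ 1 - ρ₁ - ρ₂)),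
          mul_le_mul_of_nonneg_left h1.1
            (mul_nonneg hκ.le (by linarith : (0:ℝ) ≤ 1 - ρ₁ - ρ₂)),
          mul_nonneg (mul_nonneg hκ.le hn) (by linarith : (0:ℝ) ≤ ρ₁ + ρ₂)]
    · show |(γa * (X 2 + X 3) - (γr + δh) * X 5 : ℝ)| ≤ lam * ‖X‖
      rw [abs_le, hlam]
      constructor <;>
        linarith [p1, p2, p3, p4, p5, p6, p7, p8, p9, p10, hn, mul_le_mul_of_nonneg_left h2.2 hγa.le, mul_le_mul_of_nonneg_left h2.1 hγa.le,
          mul_le_mul_of_nonneg_left h3.2 hγa.le, mul_le_mul_of_nonneg_left h3.1 hγa.le,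
          mul_le_mul_of_nonneg_left h5.2 (by positivity : (0:ℝ) ≤ γr + δh),
          mul_le_mul_of_nonneg_left h5.1 (by positivity : (0:ℝ) ≤ γr + δh)]
    · show |(γi * (X 2 + X 3) + γr * X 5 : ℝ)| ≤ lam * ‖X‖
      rw [abs_le, hlam]
      constructor <;>
        linarith [p1, p2, p3, p4, p5, p6, p7, p8, p9, p10, hn, mul_le_mul_of_nonneg_left h2.2 hγi.le, mul_le_mul_of_nonneg_left h2.1 hγi.le,
          mul_le_mul_of_nonneg_left h3.2 hγi.le, mul_le_mul_of_nonneg_left h3.1 hγi.le,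
          mul_le_mul_of_nonneg_left h5.2 hγr.le, mul_le_mul_of_nonneg_left h5.1 hγr.le]
    · show |(δi * X 2 + δp * X 3 + δh * X 5 : ℝ)| ≤ lam * ‖X‖
      rw [abs_le, hlam]
      constructor <;>
        linarith [p1, p2, p3, p4, p5, p6, p7, p8, p9, p10, hn, mul_le_mul_of_nonneg_left h2.2 hδi.le, mul_le_mul_of_nonneg_left h2.1 hδi.le,
          mul_le_mul_of_nonneg_left h3.2 hδp.le, mul_le_mul_of_nonneg_left h3.1 hδp.le,
          mul_le_mul_of_nonneg_left h5.2 hδh.le, mul_le_mul_of_nonneg_left h5.1 hδh.le]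
  exact ⟨hmain, fun ε hε => le_trans hmain (by linarith)⟩
end

section
/- The vector field F of the COVID-19 model is quasi-positive on the nonnegative orthant: for every X ∈ ℝ⁸ with all components nonnegative and for every index i ∈ {1,…,8}, if the i-th component of X is zero then the i-th component of F(X) is nonnegative. -/
/-- Quasi-positivity of the COVID-19 vector field on the nonnegative orthant. -/
theorem covidField_quasiPositive (N β β' l κ ρ₁ ρ₂ γa γi γr δi δp δh : ℝ)
    (hN : 0 < N) (hβ : 0 < β) (hβ' : 0 < β') (hl : 0 < l) (hκ : 0 < κ)
    (hρ₁ : 0 < ρ₁) (hρ₂ : 0 < ρ₂) (hρ : ρ₁ + ρ₂ < 1)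
    (hγa : 0 < γa) (hγi : 0 < γi) (hγr : 0 < γr)
    (hδi : 0 < δi) (hδp : 0 < δp) (hδh : 0 < δh) :
    ∀ X : Fin 8 → ℝ, (∀ i, 0 ≤ X i) →
      ∀ i, X i = 0 → 0 ≤ covidField N β β' l κ ρ₁ ρ₂ γa γi γr δi δp δh X i := by
  intro X hX i hi
  have h0 := hX 0; have h1 := hX 1; have h2 := hX 2; have h3 := hX 3
  have h5 := hX 5
  have hρ' : (0:ℝ) ≤ 1 - ρ₁ - ρ₂ := by linarith
  fin_cases i
  · show (0:ℝ) ≤ -(β * X 2 * X 0 / N) - l * β * X 5 * X 0 / N - β' * X 3 * X 0 / N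
    have : X 0 = 0 := hi
    rw [this]; ring_nf; positivity
  · show (0:ℝ) ≤ β * X 2 * X 0 / N + l * β * X 5 * X 0 / N + β' * X 3 * X 0 / N - κ * X 1
    have : X 1 = 0 := hi
    rw [this]; ring_nf; positivity
  · show (0:ℝ) ≤ κ * ρ₁ * X 1 - (γa + γi + δi) * X 2
    have : X 2 = 0 := hi
    rw [this]; ring_nf; positivity
  · show (0:ℝ) ≤ κ * ρ₂ * X 1 - (γa + γi + δp) * X 3
    have : X 3 = 0 := hi
    rw [this]; ring_nf; positivity
  · show (0:ℝ) ≤ κ * (1 - ρ₁ - ρ₂) * X 1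
    positivity
  · show (0:ℝ) ≤ γa * (X 2 + X 3) - (γr + δh) * X 5
    have : X 5 = 0 := hi
    rw [this]; ring_nf; positivity
  · show (0:ℝ) ≤ γi * (X 2 + X 3) + γr * X 5
    positivity
  · show (0:ℝ) ≤ δi * X 2 + δp * X 3 + δh * X 5
    positivity
end

section
/- Key Lyapunov inequality: for all real numbers S, E, I, P, H with 0 ≤ S ≤ N, E ≥ 0, I ≥ 0, P ≥ 0, H ≥ 0, one has a₀(βIS/N + lβHS/N + β′PS/N − κE) + a₁(κρ₁E − ϖᵢI) + a₂(κρ₂E − ϖ_pP) + a₃(γₐ(I + P) − ϖ_hH) ≤ κ·ϖᵢϖ_pϖ_h·(R₀ − 1)·E, where a₀, a₁, a₂, a₃ are the Lyapunov coefficients and R₀ the basic reproduction number. In particular, if R₀ < 1, this expression is ≤ 0. -/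
set_option maxHeartbeats 1000000 in
lemma lyap_aux (β β' l κ γa wi wp wh ρ₁ ρ₂ E I P H x : ℝ)
    (hx1 : x ≤ 1) (hE : 0 ≤ E) (hI : 0 ≤ I) (hP : 0 ≤ P) (hH : 0 ≤ H)
    (hβ : 0 < β) (hβ' : 0 < β') (hl : 0 < l)
    (hwi : 0 < wi) (hwp : 0 < wp) (hwh : 0 < wh) :
    wi * wp * wh * ((β * I + l * β * H + β' * P) * x - κ * E)
      + (β + β * γa * l / wh) * (wh * wp) * (κ * ρ₁ * E - wi * I)
      + (β' + β * γa * l / wh) * (wi * wh) * (κ * ρ₂ * E - wp * P)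
      + β * l * (wi * wp) * (γa * (I + P) - wh * H)
    ≤ κ * (wi * wp * wh) *
        ((β * ρ₁ * (γa * l + wh) / (wi * wh) + (β * γa * l + β' * wh) * ρ₂ / (wp * wh)) - 1) * E := by
  have hid :
      (wi * wp * wh * ((β * I + l * β * H + β' * P) * x - κ * E)
        + (β + β * γa * l / wh) * (wh * wp) * (κ * ρ₁ * E - wi * I)
        + (β' + β * γa * l / wh) * (wi * wh) * (κ * ρ₂ * E - wp * P)
        + β * l * (wi * wp) * (γa * (I + P) - wh * H))
      - (κ * (wi * wp * wh) *
          ((β * ρ₁ * (γa * l + wh) / (wi * wh) + (β * γa * l + β' * wh) * ρ₂ / (wp * wh)) - 1) * E)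
      = (x - 1) * (wi * wp * wh) * (β * I + l * β * H + β' * P) := by
    field_simp
    ring
  have hfac : (x - 1) * (wi * wp * wh) * (β * I + l * β * H + β' * P) ≤ 0 := by
    apply mul_nonpos_of_nonpos_of_nonneg
    · apply mul_nonpos_of_nonpos_of_nonneg
      · linarith
      · positivity
    · positivity
  linarith

/-- Key Lyapunov inequality: on the region `0 ≤ S ≤ N`, `E, I, P, H ≥ 0`, the
value of the Caputo derivative of the Lyapunov function along the vector field
is bounded by `κ ϖᵢ ϖ_p ϖ_h (R₀ − 1) E`; in particular it is nonpositive when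
`R₀ < 1`. Here `ϖᵢ = γa + γi + δi`, `ϖ_p = γa + γi + δp`, `ϖ_h = γr + δh`, and
`a₀, a₁, a₂, a₃` are the Lyapunov coefficients. -/
theorem lyapunov_key_inequality (N β β' l κ ρ₁ ρ₂ γa γi γr δi δp δh : ℝ)
    (hN : 0 < N) (hβ : 0 < β) (hβ' : 0 < β') (hl : 0 < l) (hκ : 0 < κ)
    (hρ₁ : 0 < ρ₁) (hρ₂ : 0 < ρ₂) (hρ : ρ₁ + ρ₂ < 1)
    (hγa : 0 < γa) (hγi : 0 < γi) (hγr : 0 < γr)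
    (hδi : 0 < δi) (hδp : 0 < δp) (hδh : 0 < δh)
    (S E I P H : ℝ) (hS0 : 0 ≤ S) (hSN : S ≤ N)
    (hE : 0 ≤ E) (hI : 0 ≤ I) (hP : 0 ≤ P) (hH : 0 ≤ H) :
    ((γa + γi + δi) * (γa + γi + δp) * (γr + δh)) *
        (β * I * S / N + l * β * H * S / N + β' * P * S / N - κ * E) +
      ((β + β * γa * l / (γr + δh)) * ((γr + δh) * (γa + γi + δp))) *
        (κ * ρ₁ * E - (γa + γi + δi) * I) +
      ((β' + β * γa * l / (γr + δh)) * ((γa + γi + δi) * (γr + δh))) *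
        (κ * ρ₂ * E - (γa + γi + δp) * P) +
      (β * l * ((γa + γi + δi) * (γa + γi + δp))) *
        (γa * (I + P) - (γr + δh) * H)
      ≤ κ * ((γa + γi + δi) * (γa + γi + δp) * (γr + δh)) *
          ((β * ρ₁ * (γa * l + (γr + δh)) / ((γa + γi + δi) * (γr + δh)) +
            (β * γa * l + β' * (γr + δh)) * ρ₂ / ((γa + γi + δp) * (γr + δh))) - 1) * E ∧
    (β * ρ₁ * (γa * l + (γr + δh)) / ((γa + γi + δi) * (γr + δh)) +
        (β * γa * l + β' * (γr + δh)) * ρ₂ / ((γa + γi + δp) * (γr + δh)) < 1 →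
      ((γa + γi + δi) * (γa + γi + δp) * (γr + δh)) *
          (β * I * S / N + l * β * H * S / N + β' * P * S / N - κ * E) +
        ((β + β * γa * l / (γr + δh)) * ((γr + δh) * (γa + γi + δp))) *
          (κ * ρ₁ * E - (γa + γi + δi) * I) +
        ((β' + β * γa * l / (γr + δh)) * ((γa + γi + δi) * (γr + δh))) *
          (κ * ρ₂ * E - (γa + γi + δp) * P) +
        (β * l * ((γa + γi + δi) * (γa + γi + δp))) *
          (γa * (I + P) - (γr + δh) * H) ≤ 0) := by
  have hwi : (0:ℝ) < γa + γi + δi := by linarith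
  have hwp : (0:ℝ) < γa + γi + δp := by linarith
  have hwh : (0:ℝ) < γr + δh := by linarith
  have hx1 : S / N ≤ 1 := by rw [div_le_one hN]; exact hSN
  have h := lyap_aux β β' l κ γa (γa + γi + δi) (γa + γi + δp) (γr + δh) ρ₁ ρ₂ E I P H
    (S / N) hx1 hE hI hP hH hβ hβ' hl hwi hwp hwh
  have e1 :
      ((γa + γi + δi) * (γa + γi + δp) * (γr + δh)) *
        (β * I * S / N + l * β * H * S / N + β' * P * S / N - κ * E) +
      ((β + β * γa * l / (γr + δh)) * ((γr + δh) * (γa + γi + δp))) *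
        (κ * ρ₁ * E - (γa + γi + δi) * I) +
      ((β' + β * γa * l / (γr + δh)) * ((γa + γi + δi) * (γr + δh))) *
        (κ * ρ₂ * E - (γa + γi + δp) * P) +
      (β * l * ((γa + γi + δi) * (γa + γi + δp))) *
        (γa * (I + P) - (γr + δh) * H)
      = (γa + γi + δi) * (γa + γi + δp) * (γr + δh) *
          ((β * I + l * β * H + β' * P) * (S / N) - κ * E)
        + (β + β * γa * l / (γr + δh)) * ((γr + δh) * (γa + γi + δp)) *
          (κ * ρ₁ * E - (γa + γi + δi) * I)
        + (β' + β * γa * l / (γr + δh)) * ((γa + γi + δi) * (γr + δh)) *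
          (κ * ρ₂ * E - (γa + γi + δp) * P)
        + β * l * ((γa + γi + δi) * (γa + γi + δp)) *
          (γa * (I + P) - (γr + δh) * H) := by ring
  have key := e1 ▸ h
  have hRHSpos : (0:ℝ) < κ * ((γa + γi + δi) * (γa + γi + δp) * (γr + δh)) := by positivity
  refine ⟨key, fun hR => ?_⟩
  have hRHS : κ * ((γa + γi + δi) * (γa + γi + δp) * (γr + δh)) *
          ((β * ρ₁ * (γa * l + (γr + δh)) / ((γa + γi + δi) * (γr + δh)) +
            (β * γa * l + β' * (γr + δh)) * ρ₂ / ((γa + γi + δp) * (γr + δh))) - 1) * E ≤ 0 := by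
    apply mul_nonpos_of_nonpos_of_nonneg _ hE
    apply mul_nonpos_of_nonneg_of_nonpos hRHSpos.le
    linarith
  linarith
end

section
/- Classical (order α = 1) Lyapunov decrease: let X = (S, E, I, P, A, H, R, D) : [0,∞) → ℝ⁸ be a differentiable solution of the ordinary differential system X′(t) = F(X(t)) with X(t) ∈ Ω for all t ≥ 0, where F is the vector field of the COVID-19 model. Define V(t) = a₀E(t) + a₁I(t) + a₂P(t) + a₃H(t) with the Lyapunov coefficients a₀, a₁, a₂, a₃. Then V′(t) ≤ κ·ϖᵢϖ_pϖ_h·(R₀ − 1)·E(t) for all t ≥ 0; in particular, if R₀ < 1 then V is nonincreasing on [0,∞). -/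
set_option maxHeartbeats 1000000


/-- The feasible region `Ω`: nonnegative components summing to at most `N`. -/
def covidOmega (N : ℝ) : Set (Fin 8 → ℝ) :=
  {X | (∀ i, 0 ≤ X i) ∧ ∑ i, X i ≤ N}

/-- Classical (order one) Lyapunov decrease along solutions of the COVID-19
model staying in the feasible region: `V'(t) ≤ κ ϖᵢ ϖ_p ϖ_h (R₀ − 1) E(t)`, so
`V` is nonincreasing on `[0, ∞)` whenever `R₀ < 1`. -/
theorem covid_classical_lyapunov_decrease (N β β' l κ ρ₁ ρ₂ γa γi γr δi δp δh : ℝ)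
    (hN : 0 < N) (hβ : 0 < β) (hβ' : 0 < β') (hl : 0 < l) (hκ : 0 < κ)
    (hρ₁ : 0 < ρ₁) (hρ₂ : 0 < ρ₂) (hρ : ρ₁ + ρ₂ < 1)
    (hγa : 0 < γa) (hγi : 0 < γi) (hγr : 0 < γr)
    (hδi : 0 < δi) (hδp : 0 < δp) (hδh : 0 < δh)
    (X : ℝ → Fin 8 → ℝ)
    (hode : ∀ t, 0 ≤ t → ∀ i,
      HasDerivAt (fun s => X s i)
        (covidField N β β' l κ ρ₁ ρ₂ γa γi γr δi δp δh (X t) i) t)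
    (hΩ : ∀ t, 0 ≤ t → X t ∈ covidOmega N) :
    (∀ t, 0 ≤ t →
      deriv (fun s =>
          ((γa + γi + δi) * (γa + γi + δp) * (γr + δh)) * X s 1 +
          ((β + β * γa * l / (γr + δh)) * ((γr + δh) * (γa + γi + δp))) * X s 2 +
          ((β' + β * γa * l / (γr + δh)) * ((γa + γi + δi) * (γr + δh))) * X s 3 +
          (β * l * ((γa + γi + δi) * (γa + γi + δp))) * X s 5) t
        ≤ κ * ((γa + γi + δi) * (γa + γi + δp) * (γr + δh)) *
            ((β * ρ₁ * (γa * l + (γr + δh)) / ((γa + γi + δi) * (γr + δh)) +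
              (β * γa * l + β' * (γr + δh)) * ρ₂ /
                ((γa + γi + δp) * (γr + δh))) - 1) * X t 1) ∧
    (β * ρ₁ * (γa * l + (γr + δh)) / ((γa + γi + δi) * (γr + δh)) +
        (β * γa * l + β' * (γr + δh)) * ρ₂ / ((γa + γi + δp) * (γr + δh)) < 1 →
      AntitoneOn (fun s =>
          ((γa + γi + δi) * (γa + γi + δp) * (γr + δh)) * X s 1 +
          ((β + β * γa * l / (γr + δh)) * ((γr + δh) * (γa + γi + δp))) * X s 2 +
          ((β' + β * γa * l / (γr + δh)) * ((γa + γi + δi) * (γr + δh))) * X s 3 +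
          (β * l * ((γa + γi + δi) * (γa + γi + δp))) * X s 5) (Set.Ici 0)) := by
  have hωi : (0:ℝ) < γa + γi + δi := by linarith
  have hωp : (0:ℝ) < γa + γi + δp := by linarith
  have hωh : (0:ℝ) < γr + δh := by linarith
  set c0 : ℝ := (γa + γi + δi) * (γa + γi + δp) * (γr + δh) with hc0
  set c1 : ℝ := (β + β * γa * l / (γr + δh)) * ((γr + δh) * (γa + γi + δp)) with hc1
  set c2 : ℝ := (β' + β * γa * l / (γr + δh)) * ((γa + γi + δi) * (γr + δh)) with hc2
  set c3 : ℝ := β * l * ((γa + γi + δi) * (γa + γi + δp)) with hc3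
  set V : ℝ → ℝ := fun s => c0 * X s 1 + c1 * X s 2 + c2 * X s 3 + c3 * X s 5 with hVdef
  have hderiv : ∀ t, 0 ≤ t → HasDerivAt V
      (c0 * covidField N β β' l κ ρ₁ ρ₂ γa γi γr δi δp δh (X t) 1 +
       c1 * covidField N β β' l κ ρ₁ ρ₂ γa γi γr δi δp δh (X t) 2 +
       c2 * covidField N β β' l κ ρ₁ ρ₂ γa γi γr δi δp δh (X t) 3 +
       c3 * covidField N β β' l κ ρ₁ ρ₂ γa γi γr δi δp δh (X t) 5) t := by
    intro t ht
    exact ((((hode t ht 1).const_mul c0).add ((hode t ht 2).const_mul c1)).add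
      ((hode t ht 3).const_mul c2)).add ((hode t ht 5).const_mul c3)
  have hbound : ∀ t, 0 ≤ t →
      c0 * covidField N β β' l κ ρ₁ ρ₂ γa γi γr δi δp δh (X t) 1 +
      c1 * covidField N β β' l κ ρ₁ ρ₂ γa γi γr δi δp δh (X t) 2 +
      c2 * covidField N β β' l κ ρ₁ ρ₂ γa γi γr δi δp δh (X t) 3 +
      c3 * covidField N β β' l κ ρ₁ ρ₂ γa γi γr δi δp δh (X t) 5
      ≤ κ * c0 *
          ((β * ρ₁ * (γa * l + (γr + δh)) / ((γa + γi + δi) * (γr + δh)) +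
            (β * γa * l + β' * (γr + δh)) * ρ₂ /
              ((γa + γi + δp) * (γr + δh))) - 1) * X t 1 := by
    intro t ht
    obtain ⟨hpos, hsum⟩ := hΩ t ht
    have hS : X t 0 ≤ N := by
      rw [Fin.sum_univ_eight] at hsum
      have h1 := hpos 1; have h2 := hpos 2; have h3 := hpos 3; have h4 := hpos 4
      have h5 := hpos 5; have h6 := hpos 6; have h7 := hpos 7
      linarith
    have hSN : X t 0 / N ≤ 1 := by
      rw [div_le_one hN]; exact hS
    have hI := hpos 2; have hP := hpos 3; have hH := hpos 5; have hE := hpos 1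
    have h1 : β * X t 2 * X t 0 / N ≤ β * X t 2 := by
      rw [mul_div_assoc]
      exact mul_le_of_le_one_right (by positivity) hSN
    have h2 : l * β * X t 5 * X t 0 / N ≤ l * β * X t 5 := by
      rw [mul_div_assoc]
      exact mul_le_of_le_one_right (by positivity) hSN
    have h3 : β' * X t 3 * X t 0 / N ≤ β' * X t 3 := by
      rw [mul_div_assoc]
      exact mul_le_of_le_one_right (by positivity) hSN
    have heq : c0 * ((β * X t 2 + l * β * X t 5 + β' * X t 3) - κ * X t 1) +
        c1 * (κ * ρ₁ * X t 1 - (γa + γi + δi) * X t 2) +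
        c2 * (κ * ρ₂ * X t 1 - (γa + γi + δp) * X t 3) +
        c3 * (γa * (X t 2 + X t 3) - (γr + δh) * X t 5) =
        κ * c0 *
          ((β * ρ₁ * (γa * l + (γr + δh)) / ((γa + γi + δi) * (γr + δh)) +
            (β * γa * l + β' * (γr + δh)) * ρ₂ /
              ((γa + γi + δp) * (γr + δh))) - 1) * X t 1 := by
      rw [hc0, hc1, hc2, hc3]
      field_simp
      ring
    have hc0pos : (0:ℝ) < c0 := by rw [hc0]; positivity
    have hmono : c0 * (β * X t 2 * X t 0 / N + l * β * X t 5 * X t 0 / N +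
        β' * X t 3 * X t 0 / N - κ * X t 1)
        ≤ c0 * ((β * X t 2 + l * β * X t 5 + β' * X t 3) - κ * X t 1) := by
      apply mul_le_mul_of_nonneg_left _ hc0pos.le
      linarith
    simp only [covidField, Matrix.cons_val_one, Matrix.head_cons, Matrix.cons_val_zero,
      Matrix.cons_val_fin_one]
    show c0 * (β * X t 2 * X t 0 / N + l * β * X t 5 * X t 0 / N +
        β' * X t 3 * X t 0 / N - κ * X t 1) +
      c1 * (κ * ρ₁ * X t 1 - (γa + γi + δi) * X t 2) +
      c2 * (κ * ρ₂ * X t 1 - (γa + γi + δp) * X t 3) +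
      c3 * (γa * (X t 2 + X t 3) - (γr + δh) * X t 5) ≤ _
    linarith [heq, hmono]
  refine ⟨fun t ht => ?_, fun hR0 => ?_⟩
  · rw [(hderiv t ht).deriv]
    exact hbound t ht
  · have : AntitoneOn V (Set.Ici 0) := by
      apply antitoneOn_of_deriv_nonpos (convex_Ici 0)
      · intro t ht
        exact (hderiv t ht).continuousAt.continuousWithinAt
      · intro t ht
        rw [interior_Ici] at ht
        exact ((hderiv t (le_of_lt ht)).differentiableAt).differentiableWithinAt
      · intro t ht
        rw [interior_Ici] at ht
        have ht' : (0:ℝ) ≤ t := le_of_lt ht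
        rw [(hderiv t ht').deriv]
        refine le_trans (hbound t ht') ?_
        have hc0pos : (0:ℝ) < c0 := by rw [hc0]; positivity
        have hE := (hΩ t ht').1 1
        have hfac : κ * c0 *
            ((β * ρ₁ * (γa * l + (γr + δh)) / ((γa + γi + δi) * (γr + δh)) +
              (β * γa * l + β' * (γr + δh)) * ρ₂ /
                ((γa + γi + δp) * (γr + δh))) - 1) ≤ 0 := by
          apply mul_nonpos_of_nonneg_of_nonpos
          · positivity
          · linarith
        exact mul_nonpos_of_nonpos_of_nonneg hfac hE
    exact this
end

section
/- Characterization of the zero set of the fractional Lyapunov derivative: for X = (S, E, I, P, A, H, R, D) ∈ Ω, the quantity W(X) := a₀·(βIS/N + lβHS/N + β′PS/N − κE) + a₁·(κρ₁E − ϖᵢI) + a₂·(κρ₂E − ϖ_pP) + a₃·(γₐ(I + P) − ϖ_hH) (the value of ᶜDᵅV along the vector field) vanishes together with the nonpositivity constraint W(X) ≤ 0 under R₀ < 1 exactly when E = I = P = H = 0; that is, if R₀ < 1 and X ∈ Ω, then W(X) = 0 if and only if E = I = P = H = 0. -/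
private lemma cov_key_identity (N β β' l κ ρ₁ ρ₂ γa γi γr δi δp δh : ℝ)
    (hNne : N ≠ 0) (hwhne : γr + δh ≠ 0) (hwine : γa + γi + δi ≠ 0)
    (hwpne : γa + γi + δp ≠ 0) (X : Fin 8 → ℝ) :
    ((γa + γi + δi) * (γa + γi + δp) * (γr + δh)) *
        (β * X 2 * X 0 / N + l * β * X 5 * X 0 / N + β' * X 3 * X 0 / N - κ * X 1) +
      ((β + β * γa * l / (γr + δh)) * ((γr + δh) * (γa + γi + δp))) *
        (κ * ρ₁ * X 1 - (γa + γi + δi) * X 2) +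
      ((β' + β * γa * l / (γr + δh)) * ((γa + γi + δi) * (γr + δh))) *
        (κ * ρ₂ * X 1 - (γa + γi + δp) * X 3) +
      (β * l * ((γa + γi + δi) * (γa + γi + δp))) *
        (γa * (X 2 + X 3) - (γr + δh) * X 5)
      = κ * ((γa + γi + δi) * (γa + γi + δp) * (γr + δh)) *
          ((β * ρ₁ * (γa * l + (γr + δh)) / ((γa + γi + δi) * (γr + δh)) +
            (β * γa * l + β' * (γr + δh)) * ρ₂ / ((γa + γi + δp) * (γr + δh))) - 1) * X 1 +
        ((γa + γi + δi) * (γa + γi + δp) * (γr + δh)) * (X 0 / N - 1) *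
          (β * X 2 + β' * X 3 + l * β * X 5) := by
  field_simp
  ring

/-- Characterization of the zero set of the fractional Lyapunov derivative:
under `R₀ < 1`, for `X ∈ Ω` the quantity `W(X)` (the value of `ᶜDᵅV` along the
vector field) vanishes exactly when `E = I = P = H = 0`. -/
theorem lyapunov_derivative_zero_iff (N β β' l κ ρ₁ ρ₂ γa γi γr δi δp δh : ℝ)
    (hN : 0 < N) (hβ : 0 < β) (hβ' : 0 < β') (hl : 0 < l) (hκ : 0 < κ)
    (hρ₁ : 0 < ρ₁) (hρ₂ : 0 < ρ₂) (hρ : ρ₁ + ρ₂ < 1)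
    (hγa : 0 < γa) (hγi : 0 < γi) (hγr : 0 < γr)
    (hδi : 0 < δi) (hδp : 0 < δp) (hδh : 0 < δh)
    (hR0 : β * ρ₁ * (γa * l + (γr + δh)) / ((γa + γi + δi) * (γr + δh)) +
      (β * γa * l + β' * (γr + δh)) * ρ₂ / ((γa + γi + δp) * (γr + δh)) < 1)
    (X : Fin 8 → ℝ) (hX : X ∈ covidOmega N) :
    ((γa + γi + δi) * (γa + γi + δp) * (γr + δh)) *
        (β * X 2 * X 0 / N + l * β * X 5 * X 0 / N + β' * X 3 * X 0 / N - κ * X 1) +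
      ((β + β * γa * l / (γr + δh)) * ((γr + δh) * (γa + γi + δp))) *
        (κ * ρ₁ * X 1 - (γa + γi + δi) * X 2) +
      ((β' + β * γa * l / (γr + δh)) * ((γa + γi + δi) * (γr + δh))) *
        (κ * ρ₂ * X 1 - (γa + γi + δp) * X 3) +
      (β * l * ((γa + γi + δi) * (γa + γi + δp))) *
        (γa * (X 2 + X 3) - (γr + δh) * X 5) = 0 ↔
    X 1 = 0 ∧ X 2 = 0 ∧ X 3 = 0 ∧ X 5 = 0 := by
  obtain ⟨hXnn, hXsum⟩ := hX
  have hwi : (0:ℝ) < γa + γi + δi := by linarith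
  have hwp : (0:ℝ) < γa + γi + δp := by linarith
  have hwh : (0:ℝ) < γr + δh := by linarith
  have hNne : N ≠ 0 := ne_of_gt hN
  have hwhne : γr + δh ≠ 0 := ne_of_gt hwh
  set r : ℝ := β * ρ₁ * (γa * l + (γr + δh)) / ((γa + γi + δi) * (γr + δh)) +
      (β * γa * l + β' * (γr + δh)) * ρ₂ / ((γa + γi + δp) * (γr + δh)) with hrdef
  set A : ℝ := (γa + γi + δi) * (γa + γi + δp) * (γr + δh) with hAdef
  have hA : 0 < A := by positivity
  have key := cov_key_identity N β β' l κ ρ₁ ρ₂ γa γi γr δi δp δh hNne hwhne hwi.ne' hwp.ne' X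
  rw [← hrdef, ← hAdef] at key
  clear_value r A
  rw [key]
  have hE := hXnn 1
  have hI := hXnn 2
  have hP := hXnn 3
  have hH := hXnn 5
  have hsum : X 0 + X 1 + X 2 + X 3 + X 4 + X 5 + X 6 + X 7 ≤ N := by
    have := hXsum
    rwa [Fin.sum_univ_eight] at this
  have hS : X 0 ≤ N := by
    have := hXnn 0; have h4 := hXnn 4; have h6 := hXnn 6; have h7 := hXnn 7
    linarith
  have hSN : X 0 / N - 1 ≤ 0 := by
    have : X 0 / N ≤ 1 := (div_le_one hN).mpr hS
    linarith
  constructor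
  · intro h
    have hc : κ * A * (r - 1) < 0 := by
      have : r - 1 < 0 := by linarith [hR0]
      have hk : 0 < κ * A := by positivity
      exact mul_neg_of_pos_of_neg hk this
    have hsum2 : 0 ≤ β * X 2 + β' * X 3 + l * β * X 5 := by positivity
    have ht1 : κ * A * (r - 1) * X 1 ≤ 0 := mul_nonpos_of_nonpos_of_nonneg (le_of_lt hc) hE
    have ht2 : A * (X 0 / N - 1) * (β * X 2 + β' * X 3 + l * β * X 5) ≤ 0 := by
      apply mul_nonpos_of_nonpos_of_nonneg _ hsum2
      exact mul_nonpos_of_nonneg_of_nonpos (le_of_lt hA) hSN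
    have ht1z : κ * A * (r - 1) * X 1 = 0 := by linarith
    have ht2z : A * (X 0 / N - 1) * (β * X 2 + β' * X 3 + l * β * X 5) = 0 := by linarith
    have hE0 : X 1 = 0 := by
      rcases mul_eq_zero.mp ht1z with h' | h'
      · exact absurd h' (ne_of_lt hc)
      · exact h'
    rcases mul_eq_zero.mp ht2z with h' | h'
    · rcases mul_eq_zero.mp h' with h'' | h''
      · exact absurd h'' (ne_of_gt hA)
      · -- X 0 / N = 1, so X 0 = N, so other components zero
        have hS0 : X 0 = N := by
          have : X 0 / N = 1 := by linarith
          field_simp at this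
          linarith
        have h4 := hXnn 4; have h6 := hXnn 6; have h7 := hXnn 7
        refine ⟨hE0, by linarith, by linarith, by linarith⟩
    · -- β I + β' P + l β H = 0 with nonneg summands
      have a1 : 0 ≤ β * X 2 := mul_nonneg hβ.le hI
      have a2 : 0 ≤ β' * X 3 := mul_nonneg hβ'.le hP
      have a3 : 0 ≤ l * β * X 5 := mul_nonneg (mul_nonneg hl.le hβ.le) hH
      have e1 : β * X 2 = 0 := by linarith
      have e2 : β' * X 3 = 0 := by linarith
      have e3 : l * β * X 5 = 0 := by linarith
      refine ⟨hE0, (mul_eq_zero.mp e1).resolve_left hβ.ne', (mul_eq_zero.mp e2).resolve_left hβ'.ne', ?_⟩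
      rcases mul_eq_zero.mp e3 with h'' | h''
      · exact absurd h'' (by positivity)
      · exact h''
  · rintro ⟨h1, h2, h3, h5⟩
    rw [h1, h2, h3, h5]
    ring
end
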